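/- arXiv:2605.18965 — 8 statements merged into one kernel-verified Lean document; each statement's English description precedes it below -/
import Mathlib

section
/- Let a : ℝ → ℝ be twice continuously differentiable with a(t) > 0 for all t, let H(t) = a'(t)/a(t), and let k be a real number. Then for all real numbers T₋ ≤ T₊, ∫_{T₋}^{T₊} (−2·(H'(t) − k/a(t)²))/a(t) dt = −2·(H(T₊)/a(T₊) − H(T₋)/a(T₋)) − 2·∫_{T₋}^{T₊} H(t)²/a(t) dt + 2k·∫_{T₋}^{T₊} a(t)^{−3} dt. -/
open MeasureTheory

/-!
Write `H = a'/a`. Since `(1/a)' = -H/a`, integrating `H · (1/a)` by parts gives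
`∫ H'/a = [H/a] + ∫ H²/a`; the curvature term contributes `k ∫ a⁻³` directly.
-/

section LogDeriv

variable {a : ℝ → ℝ}

theorem ContDiff.logDeriv {n : ℕ} (ha : ContDiff ℝ (n + 1) a) (ha₀ : ∀ t, a t ≠ 0) :
    ContDiff ℝ n (logDeriv a) :=
  (contDiff_succ_iff_deriv.mp ha).2.2.div (ha.of_le (by norm_cast; omega)) ha₀

theorem hasDerivAt_inv_logDeriv {t : ℝ} (ha : DifferentiableAt ℝ a t) (ha₀ : a t ≠ 0) :
    HasDerivAt (fun s => (a s)⁻¹) (-(logDeriv a t / a t)) t := by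
  refine (ha.hasDerivAt.fun_inv ha₀).congr_deriv ?_
  rw [logDeriv_apply]
  field_simp

theorem integral_deriv_logDeriv_div (ha : ContDiff ℝ 2 a) (ha₀ : ∀ t, a t ≠ 0) (T₀ T₁ : ℝ) :
    ∫ t in T₀..T₁, deriv (logDeriv a) t / a t
      = logDeriv a T₁ / a T₁ - logDeriv a T₀ / a T₀ + ∫ t in T₀..T₁, logDeriv a t ^ 2 / a t := by
  have hH : ContDiff ℝ 1 (logDeriv a) := ha.logDeriv ha₀
  have ha_cont : Continuous a := ha.continuous
  have hparts := intervalIntegral.integral_deriv_mul_eq_sub (a := T₀) (b := T₁)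
    (fun t _ => (hH.differentiable one_ne_zero t).hasDerivAt)
    (fun t _ => hasDerivAt_inv_logDeriv (ha.differentiable two_ne_zero t) (ha₀ t))
    ((hH.continuous_deriv le_rfl).intervalIntegrable _ _)
    (((hH.continuous.div ha_cont ha₀).neg).intervalIntegrable _ _)
  have hsq_int : IntervalIntegrable (fun t => logDeriv a t ^ 2 / a t) volume T₀ T₁ :=
    ((hH.continuous.pow 2).div ha_cont ha₀).intervalIntegrable _ _
  have hintegrand : ∀ t, deriv (logDeriv a) t / a t
      = (deriv (logDeriv a) t * (a t)⁻¹ + logDeriv a t * -(logDeriv a t / a t))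
        + logDeriv a t ^ 2 / a t := fun t => by ring
  simp only [hintegrand]
  rw [intervalIntegral.integral_add _ hsq_int, hparts]
  · simp only [div_eq_mul_inv]
  · exact (((hH.continuous_deriv le_rfl).div ha_cont ha₀).intervalIntegrable _ _).sub hsq_int
      |>.congr (fun t _ => by rw [Pi.div_apply]; ring)

end LogDeriv

/-- Master finite-interval curvature-dependent ANEC identity (Eq. (3.3)):
`∫_{T₋}^{T₊} (−2(H' − k/a²))/a = −2 (H/a)|_{T₋}^{T₊} − 2∫ H²/a + 2k ∫ a⁻³`. -/
theorem curvature_finite_interval_ANEC_identity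
    (a H : ℝ → ℝ) (k : ℝ) (ha : ContDiff ℝ 2 a) (hpos : ∀ t, 0 < a t)
    (hH : ∀ t, H t = deriv a t / a t) :
    ∀ Tm Tp : ℝ, Tm ≤ Tp →
      (∫ t in Tm..Tp, (-2 * (deriv H t - k / (a t) ^ 2)) / a t)
        = -2 * (H Tp / a Tp - H Tm / a Tm)
          - 2 * (∫ t in Tm..Tp, (H t) ^ 2 / a t)
          + 2 * k * ∫ t in Tm..Tp, 1 / (a t) ^ 3 := by
  intro Tm Tp _
  obtain rfl : H = logDeriv a := funext hH
  have ha₀ : ∀ t, a t ≠ 0 := fun t => (hpos t).ne'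
  have ha_cont : Continuous a := ha.continuous
  have hintegrand : ∀ t, (-2 * (deriv (logDeriv a) t - k / (a t) ^ 2)) / a t
      = -2 * (deriv (logDeriv a) t / a t) + 2 * k * (1 / (a t) ^ 3) := fun t => by
    field_simp [ha₀ t]
    ring
  simp only [hintegrand]
  rw [intervalIntegral.integral_add, intervalIntegral.integral_const_mul,
    intervalIntegral.integral_const_mul, integral_deriv_logDeriv_div ha ha₀]
  · ring
  · exact (((ha.logDeriv ha₀).continuous_deriv le_rfl).div ha_cont ha₀).intervalIntegrable _ _
      |>.const_mul _
  · exact ((continuous_const.div (ha_cont.pow 3) fun t => pow_ne_zero 3 (ha₀ t)).intervalIntegrable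
      _ _).const_mul _
end

section
/- Let a : ℝ → ℝ be twice continuously differentiable with a(t) > 0 for all t and with H(t) = a'(t)/a(t) not identically zero. Suppose H(t)/a(t) tends to finite limits as t → +∞ and as t → −∞, and suppose ∫_{0}^{T} a(t) dt → +∞ as T → +∞ and ∫_{−T}^{0} a(t) dt → +∞ as T → +∞ (null completeness in both directions). Define I(T₋,T₊) = ∫_{T₋}^{T₊} (−2H'(t))/a(t) dt. Then I(T₋,T₊) converges, as T₋ → −∞ and T₊ → +∞, to a limit l in the extended reals with l < 0; specifically, either l = −∞, or ∫_ℝ H²/a < ∞, both endpoint limits of H/a are zero, and l = −2·∫_ℝ H(t)²/a(t) dt < 0. -/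
/-!
With `H = a'/a`, the quotient rule gives `(H/a)' = (H' - H²)/a`, so the ANEC integrand splits as
`-2H'/a = -2H²/a - 2(H/a)'`. The total-derivative part contributes only the boundary values of
`H/a`, which converge by assumption, while `∫ H²/a` is nonnegative: it either diverges, forcing the
limit `-∞`, or converges to a positive number. In the second case both limits of `H/a` vanish,
since `H²/a = (H/a)² a` would otherwise dominate a positive multiple of `a` near that end,
whose integral diverges by null completeness.
-/

open Filter MeasureTheory Set

theorem contDiff_logDeriv {a : ℝ → ℝ} {n : WithTop ℕ∞} (ha : ContDiff ℝ (n + 1) a)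
    (ha0 : ∀ t, a t ≠ 0) : ContDiff ℝ n (logDeriv a) :=
  (contDiff_succ_iff_deriv.1 ha).2.2.div (ha.of_le le_self_add) ha0

theorem continuous_logDeriv_sq_div_self {a : ℝ → ℝ} (ha : ContDiff ℝ 2 a) (ha0 : ∀ t, a t ≠ 0) :
    Continuous fun t => logDeriv a t ^ 2 / a t :=
  ((contDiff_logDeriv (n := 1) (by simpa [one_add_one_eq_two]) ha0).continuous.pow 2).div
    ha.continuous ha0

theorem deriv_logDeriv_div_self {𝕜 : Type*} [NontriviallyNormedField 𝕜] {a : 𝕜 → 𝕜} {t : 𝕜}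
    (ha : DifferentiableAt 𝕜 a t) (hH : DifferentiableAt 𝕜 (logDeriv a) t) (ha0 : a t ≠ 0) :
    deriv (fun s => logDeriv a s / a s) t = (deriv (logDeriv a) t - logDeriv a t ^ 2) / a t := by
  rw [deriv_fun_div hH ha ha0, logDeriv_apply]
  field_simp

theorem integral_deriv_logDeriv_div_self {a : ℝ → ℝ} (ha : ContDiff ℝ 2 a) (ha0 : ∀ t, a t ≠ 0)
    (x y : ℝ) :
    ∫ t in x..y, deriv (logDeriv a) t / a t =
      (∫ t in x..y, logDeriv a t ^ 2 / a t) + (logDeriv a y / a y - logDeriv a x / a x) := by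
  have hH : ContDiff ℝ 1 (logDeriv a) := contDiff_logDeriv (by simpa [one_add_one_eq_two]) ha0
  have ha1 : ContDiff ℝ 1 a := ha.of_le one_le_two
  have hf : ContDiff ℝ 1 (fun t => logDeriv a t / a t) := hH.div ha1 ha0
  have hsplit : ∀ t, deriv (logDeriv a) t / a t =
      logDeriv a t ^ 2 / a t + deriv (fun s => logDeriv a s / a s) t := fun t => by
    rw [deriv_logDeriv_div_self (ha1.differentiable one_ne_zero t)
      (hH.differentiable one_ne_zero t) (ha0 t), sub_div, add_sub_cancel]
  simp only [hsplit]
  rw [intervalIntegral.integral_add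
      ((continuous_logDeriv_sq_div_self ha ha0).intervalIntegrable _ _)
      ((hf.continuous_deriv le_rfl).intervalIntegrable _ _),
    intervalIntegral.integral_deriv_eq_sub (fun t _ => hf.differentiable one_ne_zero t)
      ((hf.continuous_deriv le_rfl).intervalIntegrable _ _)]

theorem tendsto_intervalIntegral_atTop_of_not_integrable {g : ℝ → ℝ} (hg : LocallyIntegrable g)
    (hg0 : 0 ≤ g) (hgi : ¬ Integrable g) :
    Tendsto (fun p : ℝ × ℝ => ∫ t in p.1..p.2, g t) (atBot ×ˢ atTop) atTop := by
  have hunbdd : ∀ M, ∃ n : ℕ, M ≤ ∫ t in -(n : ℝ)..n, g t := by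
    by_contra! h
    obtain ⟨M, hM⟩ := h
    refine hgi (integrable_of_intervalIntegral_norm_bounded M
      (fun n => (hg.integrableOn_isCompact isCompact_Icc).mono_set Ioc_subset_Icc_self)
      (tendsto_neg_atTop_atBot.comp tendsto_natCast_atTop_atTop) tendsto_natCast_atTop_atTop
      (Eventually.of_forall fun n => ?_))
    simpa only [Function.comp_apply, Real.norm_of_nonneg (hg0 _)] using (hM n).le
  refine tendsto_atTop.2 fun M => ?_
  obtain ⟨n, hn⟩ := hunbdd M
  filter_upwards [tendsto_fst.eventually (eventually_le_atBot (-(n : ℝ))),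
    tendsto_snd.eventually (eventually_ge_atTop (n : ℝ))] with p h1 h2
  exact hn.trans (intervalIntegral.integral_mono_interval h1 (by linarith [n.cast_nonneg (α := ℝ)])
    h2 (Eventually.of_forall hg0) (hg.integrableOn_isCompact isCompact_uIcc).intervalIntegrable)

theorem eq_zero_of_integrableOn_sq_mul_of_tendsto {f a : ℝ → ℝ} {L : ℝ} (ha : Continuous a)
    (ha0 : 0 ≤ a) (hf : Tendsto f atTop (nhds L))
    (hfa : IntegrableOn (fun t => f t ^ 2 * a t) (Ioi 0))
    (hdiv : Tendsto (fun T => ∫ t in (0 : ℝ)..T, a t) atTop atTop) : L = 0 := by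
  by_contra hL
  have hc : 0 < L ^ 2 / 2 := by positivity
  obtain ⟨T, hT⟩ := eventually_atTop.1 <| (hf.pow 2).eventually <|
    eventually_ge_nhds (half_lt_self (by positivity : 0 < L ^ 2))
  have hle : ∀ t ≥ T, a t ≤ (L ^ 2 / 2)⁻¹ * (f t ^ 2 * a t) := fun t ht => by
    rw [inv_mul_eq_div, le_div_iff₀ hc]
    linarith [mul_le_mul_of_nonneg_right (hT t ht) (ha0 t)]
  have hfar : IntegrableOn a (Ioi (max T 0)) :=
    Integrable.mono' ((hfa.mono_set (Ioi_subset_Ioi (le_max_right T 0))).const_mul _)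
      ha.aestronglyMeasurable.restrict <| (ae_restrict_iff' measurableSet_Ioi).2 <|
        Eventually.of_forall fun t ht => by
          rw [Real.norm_of_nonneg (ha0 t)]
          exact hle t ((le_max_left T 0).trans ht.le)
  have haI : IntegrableOn a (Ioi 0) := by
    rw [← Ioc_union_Ioi_eq_Ioi (le_max_right T 0)]
    exact ha.integrableOn_Ioc.union hfar
  exact not_tendsto_nhds_of_tendsto_atTop hdiv _
    (intervalIntegral_tendsto_integral_Ioi 0 haI tendsto_id)

theorem eq_zero_of_integrable_sq_mul_of_tendsto_atBot {f a : ℝ → ℝ} {L : ℝ} (ha : Continuous a)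
    (ha0 : 0 ≤ a) (hf : Tendsto f atBot (nhds L)) (hfa : Integrable (fun t => f t ^ 2 * a t))
    (hdiv : Tendsto (fun T => ∫ t in -T..(0 : ℝ), a t) atTop atTop) : L = 0 := by
  refine eq_zero_of_integrableOn_sq_mul_of_tendsto (ha.comp continuous_neg) (fun t => ha0 (-t))
    (hf.comp tendsto_neg_atTop_atBot) hfa.comp_neg.integrableOn ?_
  simpa only [Function.comp_apply, intervalIntegral.integral_comp_neg, neg_zero] using hdiv

/-- Theorem 4.3 / Corollary 4.4 (direct form): a non-static, null-complete flat FRW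
spacetime with regular affine ends has affine ANEC limit `l < 0` in the extended reals:
either `l = −∞`, or `∫ H²/a < ∞`, both endpoint limits of `H/a` vanish, and
`l = −2 ∫_ℝ H²/a < 0`. -/
theorem flat_null_complete_ANEC_negative
    (a H : ℝ → ℝ) (ha : ContDiff ℝ 2 a) (hpos : ∀ t, 0 < a t)
    (hH : ∀ t, H t = deriv a t / a t)
    (hns : ∃ t, H t ≠ 0)
    (hlimp : ∃ Lp : ℝ, Tendsto (fun t => H t / a t) atTop (nhds Lp))
    (hlimm : ∃ Lm : ℝ, Tendsto (fun t => H t / a t) atBot (nhds Lm))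
    (hfut : Tendsto (fun T => ∫ t in (0:ℝ)..T, a t) atTop atTop)
    (hpast : Tendsto (fun T => ∫ t in (-T)..(0:ℝ), a t) atTop atTop) :
    ∃ l : EReal,
      Tendsto (fun p : ℝ × ℝ =>
          ((∫ t in p.1..p.2, (-2 * deriv H t) / a t : ℝ) : EReal))
        (atBot ×ˢ atTop) (nhds l) ∧
      l < 0 ∧
      (l = ⊥ ∨
        (Integrable (fun t => (H t) ^ 2 / a t) ∧
          Tendsto (fun t => H t / a t) atTop (nhds 0) ∧
          Tendsto (fun t => H t / a t) atBot (nhds 0) ∧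
          l = ((-2 * ∫ t : ℝ, (H t) ^ 2 / a t : ℝ) : EReal) ∧
          (-2 * ∫ t : ℝ, (H t) ^ 2 / a t : ℝ) < 0)) := by
  obtain ⟨Lp, hLp⟩ := hlimp
  obtain ⟨Lm, hLm⟩ := hlimm
  obtain ⟨t₀, ht₀⟩ := hns
  obtain rfl : H = logDeriv a := funext hH
  have ha0 : ∀ t, a t ≠ 0 := fun t => (hpos t).ne'
  have hI : ∀ p : ℝ × ℝ, ∫ t in p.1..p.2, (-2 * deriv (logDeriv a) t) / a t =
      -2 * ((∫ t in p.1..p.2, logDeriv a t ^ 2 / a t) +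
        (logDeriv a p.2 / a p.2 - logDeriv a p.1 / a p.1)) := fun p => by
    simp only [mul_div_assoc, intervalIntegral.integral_const_mul,
      integral_deriv_logDeriv_div_self ha ha0]
  have hbdry := (hLp.comp tendsto_snd).sub (hLm.comp tendsto_fst)
  have hg := continuous_logDeriv_sq_div_self ha ha0
  have hg0 : 0 ≤ fun t => logDeriv a t ^ 2 / a t := fun t => div_nonneg (sq_nonneg _) (hpos t).le
  by_cases hgi : Integrable fun t => logDeriv a t ^ 2 / a t
  · have hsq : Integrable fun t => (logDeriv a t / a t) ^ 2 * a t :=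
      hgi.congr (Eventually.of_forall fun t => by field_simp [ha0 t])
    have hLp0 := eq_zero_of_integrableOn_sq_mul_of_tendsto ha.continuous (fun t => (hpos t).le)
      hLp hsq.integrableOn hfut
    have hLm0 := eq_zero_of_integrable_sq_mul_of_tendsto_atBot ha.continuous
      (fun t => (hpos t).le) hLm hsq hpast
    have hJ := integral_pos_of_integrable_nonneg_nonzero hg hgi hg0
      (div_ne_zero (pow_ne_zero 2 ht₀) (ha0 t₀))
    have hlim := ((intervalIntegral_tendsto_integral hgi tendsto_fst tendsto_snd).add
      hbdry).const_mul (-2)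
    rw [hLp0, hLm0, sub_zero, add_zero] at hlim
    refine ⟨_, EReal.tendsto_coe.2 (hlim.congr fun p => (hI p).symm), ?_,
      Or.inr ⟨hgi, hLp0 ▸ hLp, hLm0 ▸ hLm, rfl, by linarith⟩⟩
    exact_mod_cast (by linarith : -2 * ∫ t, logDeriv a t ^ 2 / a t < 0)
  · refine ⟨⊥, EReal.tendsto_coe_nhds_bot_iff.2 ?_, EReal.bot_lt_zero, Or.inl rfl⟩
    have hdiv := (tendsto_intervalIntegral_atTop_of_not_integrable hg.locallyIntegrable hg0
      hgi).atTop_add hbdry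
    exact ((tendsto_const_mul_atBot_of_neg (by norm_num)).2 hdiv).congr fun p => (hI p).symm
end

section
/- Let a : ℝ → ℝ be twice continuously differentiable with a(t) > 0 for all t and H(t) = a'(t)/a(t) not identically zero. Suppose H(t)/a(t) tends to finite limits as t → ±∞, and suppose the finite-interval integrals I(T₋,T₊) = ∫_{T₋}^{T₊} (−2H'(t))/a(t) dt converge, as T₋ → −∞ and T₊ → +∞, to a limit l in the extended reals with l ≥ 0 (allowing l = +∞). Then at least one of ∫_{0}^{T} a(t) dt or ∫_{−T}^{0} a(t) dt remains bounded as T → +∞; that is, the spacetime is null-incomplete in at least one time direction. -/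
/-!
Write `g = H/a`. Since `a' = H a`, one has `g' = H'/a - g² a`, so the finite-interval ANEC
integral equals `2 g(T₋) - 2 g(T₊) - 2 ∫_{T₋}^{T₊} g² a`. The boundary term converges and the
limit `l` is not `-∞`, hence `g² a ≥ 0` is integrable on `ℝ`. If `∫ a` diverged at both ends, a
nonzero limit of `g` at an end would give `a = O(g² a)` there, making `a` integrable at that end;
so both limits of `g` vanish and `l = -2 ∫ g² a ≥ 0`. Thus `g² a ≡ 0`, i.e. `H ≡ 0`.
-/

open Filter MeasureTheory Set Topology Asymptotics

theorem isBigO_mul_left_of_tendsto_ne_zero {α 𝕜 : Type*} [NormedField 𝕜] {l : Filter α}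
    {ψ f : α → 𝕜} {c : 𝕜} (hψ : Tendsto ψ l (𝓝 c)) (hc : c ≠ 0) :
    f =O[l] fun x => ψ x * f x := by
  refine .of_bound (‖c‖ / 2)⁻¹ ?_
  filter_upwards [hψ.norm.eventually_const_lt (half_lt_self (norm_pos_iff.2 hc))] with x hx
  calc ‖f x‖ = (‖c‖ / 2)⁻¹ * (‖c‖ / 2 * ‖f x‖) := by field_simp
    _ ≤ (‖c‖ / 2)⁻¹ * ‖ψ x * f x‖ := by rw [norm_mul]; gcongr

theorem integrableAtFilter_of_tendsto_ne_zero {α : Type*} [MeasurableSpace α] {μ : Measure α}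
    {l : Filter α} [l.IsMeasurablyGenerated] {g a : α → ℝ} {L : ℝ}
    (hg : Tendsto g l (𝓝 L)) (hL : L ≠ 0) (ha : StronglyMeasurableAtFilter a l μ)
    (hga : IntegrableAtFilter (fun x => g x ^ 2 * a x) l μ) : IntegrableAtFilter a l μ :=
  (isBigO_mul_left_of_tendsto_ne_zero (hg.pow 2) (pow_ne_zero 2 hL)).integrableAtFilter ha hga

theorem exists_forall_intervalIntegral_le_of_integrableAtFilter_atTop {a : ℝ → ℝ}
    (ha : Continuous a) (ha0 : 0 ≤ a) (h : IntegrableAtFilter a atTop) :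
    ∃ M : ℝ, ∀ T : ℝ, ∫ t in (0:ℝ)..T, a t ≤ M := by
  have hi : IntegrableOn a (Ici 0) :=
    integrableOn_Ici_iff_integrableAtFilter_atTop.2
      ⟨h, ha.locallyIntegrable.locallyIntegrableOn _⟩
  refine ⟨∫ t in Ici 0, a t, fun T => ?_⟩
  calc ∫ t in (0:ℝ)..T, a t = (∫ t in Ioc 0 T, a t) - ∫ t in Ioc T 0, a t := rfl
    _ ≤ ∫ t in Ioc 0 T, a t :=
      sub_le_self _ (setIntegral_nonneg measurableSet_Ioc fun t _ => ha0 t)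
    _ ≤ ∫ t in Ici 0, a t := setIntegral_mono_set hi (ae_of_all _ ha0)
      (Ioc_subset_Icc_self.trans Icc_subset_Ici_self).eventuallyLE

theorem exists_forall_intervalIntegral_le_of_integrableAtFilter_atBot {a : ℝ → ℝ}
    (ha : Continuous a) (ha0 : 0 ≤ a) (h : IntegrableAtFilter a atBot) :
    ∃ M : ℝ, ∀ T : ℝ, ∫ t in (-T)..(0:ℝ), a t ≤ M := by
  have hi : IntegrableOn a (Iic 0) :=
    integrableOn_Iic_iff_integrableAtFilter_atBot.2
      ⟨h, ha.locallyIntegrable.locallyIntegrableOn _⟩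
  refine ⟨∫ t in Iic 0, a t, fun T => ?_⟩
  calc ∫ t in (-T)..(0:ℝ), a t = (∫ t in Ioc (-T) 0, a t) - ∫ t in Ioc 0 (-T), a t := rfl
    _ ≤ ∫ t in Ioc (-T) 0, a t :=
      sub_le_self _ (setIntegral_nonneg measurableSet_Ioc fun t _ => ha0 t)
    _ ≤ ∫ t in Iic 0, a t :=
      setIntegral_mono_set hi (ae_of_all _ ha0) Ioc_subset_Iic_self.eventuallyLE

theorem eq_zero_of_integral_nonpos {X : Type*} [TopologicalSpace X] [MeasurableSpace X]
    {μ : Measure X} [μ.IsOpenPosMeasure] {f : X → ℝ} (hf : Continuous f) (hf0 : 0 ≤ f)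
    (hfi : Integrable f μ) (h : ∫ x, f x ∂μ ≤ 0) : f = 0 :=
  (hf.ae_eq_iff_eq μ continuous_const).1
    ((integral_eq_zero_iff_of_nonneg hf0 hfi).1 (le_antisymm h (integral_nonneg hf0)))

section FlatFRW

variable {a H : ℝ → ℝ}

theorem contDiff_one_of_eq_deriv_div (ha : ContDiff ℝ 2 a) (hpos : ∀ t, 0 < a t)
    (hH : ∀ t, H t = deriv a t / a t) : ContDiff ℝ 1 H := by
  rw [funext hH]
  exact ha.deriv'.div (ha.of_le (by norm_num)) fun t => (hpos t).ne'

theorem hasDerivAt_div_of_eq_deriv_div (ha : ContDiff ℝ 2 a) (hpos : ∀ t, 0 < a t)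
    (hH : ∀ t, H t = deriv a t / a t) (t : ℝ) :
    HasDerivAt (fun s => H s / a s) (deriv H t / a t - (H t / a t) ^ 2 * a t) t := by
  have hHd := (contDiff_one_of_eq_deriv_div ha hpos hH).differentiable one_ne_zero t
  have had := ha.differentiable (by norm_num) t
  refine (hHd.hasDerivAt.div had.hasDerivAt (hpos t).ne').congr_deriv ?_
  rw [hH t]
  field_simp [(hpos t).ne']

theorem continuous_div_sq_mul_of_eq_deriv_div (ha : ContDiff ℝ 2 a) (hpos : ∀ t, 0 < a t)
    (hH : ∀ t, H t = deriv a t / a t) : Continuous fun t => (H t / a t) ^ 2 * a t :=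
  (((contDiff_one_of_eq_deriv_div ha hpos hH).continuous.div ha.continuous
    fun t => (hpos t).ne').pow 2).mul ha.continuous

theorem intervalIntegral_anec_eq (ha : ContDiff ℝ 2 a) (hpos : ∀ t, 0 < a t)
    (hH : ∀ t, H t = deriv a t / a t) (x y : ℝ) :
    ∫ t in x..y, (-2 * deriv H t) / a t =
      2 * (H x / a x) - 2 * (H y / a y) - 2 * ∫ t in x..y, (H t / a t) ^ 2 * a t := by
  have hH1 := contDiff_one_of_eq_deriv_div ha hpos hH
  have hane : ∀ t, a t ≠ 0 := fun t => (hpos t).ne'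
  have hH'a : Continuous fun t => deriv H t / a t :=
    (hH1.continuous_deriv le_rfl).div ha.continuous hane
  have hf := continuous_div_sq_mul_of_eq_deriv_div ha hpos hH
  have hFTC := intervalIntegral.integral_eq_sub_of_hasDerivAt
    (fun t _ => hasDerivAt_div_of_eq_deriv_div ha hpos hH t)
    ((hH'a.sub hf).intervalIntegrable x y)
  rw [intervalIntegral.integral_sub (hH'a.intervalIntegrable x y) (hf.intervalIntegrable x y)]
    at hFTC
  simp_rw [mul_div_assoc, intervalIntegral.integral_const_mul]
  linarith

theorem tendsto_anec_boundary_term {Lp Lm : ℝ} (hgp : Tendsto (fun t => H t / a t) atTop (𝓝 Lp))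
    (hgm : Tendsto (fun t => H t / a t) atBot (𝓝 Lm)) :
    Tendsto (fun p : ℝ × ℝ => 2 * (H p.1 / a p.1) - 2 * (H p.2 / a p.2)) (atBot ×ˢ atTop)
      (𝓝 (2 * Lm - 2 * Lp)) :=
  ((hgm.comp tendsto_fst).const_mul 2).sub ((hgp.comp tendsto_snd).const_mul 2)

theorem integrable_of_tendsto_anec (ha : ContDiff ℝ 2 a) (hpos : ∀ t, 0 < a t)
    (hH : ∀ t, H t = deriv a t / a t) {Lp Lm : ℝ}
    (hgp : Tendsto (fun t => H t / a t) atTop (𝓝 Lp))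
    (hgm : Tendsto (fun t => H t / a t) atBot (𝓝 Lm)) {l : EReal}
    (hconv : Tendsto (fun p : ℝ × ℝ => ((∫ t in p.1..p.2, (-2 * deriv H t) / a t : ℝ) : EReal))
      (atBot ×ˢ atTop) (𝓝 l))
    (hl : ⊥ < l) :
    Integrable fun t => (H t / a t) ^ 2 * a t := by
  obtain ⟨m, -, hml⟩ := EReal.lt_iff_exists_real_btwn.1 hl
  have hf := continuous_div_sq_mul_of_eq_deriv_div ha hpos hH
  refine integrable_of_intervalIntegral_norm_bounded ((2 * Lm - 2 * Lp + 1 - m) / 2)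
    (fun p => hf.integrableOn_Ioc) tendsto_fst tendsto_snd ?_
  filter_upwards [hconv.eventually (lt_mem_nhds hml),
    (tendsto_anec_boundary_term hgp hgm).eventually (gt_mem_nhds (lt_add_one _))] with p hIp hBp
  have hnorm : ∀ t, ‖(H t / a t) ^ 2 * a t‖ = (H t / a t) ^ 2 * a t := fun t =>
    Real.norm_of_nonneg (mul_nonneg (sq_nonneg _) (hpos t).le)
  simp only [hnorm]
  have hIeq := intervalIntegral_anec_eq ha hpos hH p.1 p.2
  have hIm : m < ∫ t in p.1..p.2, (-2 * deriv H t) / a t := EReal.coe_lt_coe_iff.1 hIp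
  linarith

theorem tendsto_intervalIntegral_anec (ha : ContDiff ℝ 2 a) (hpos : ∀ t, 0 < a t)
    (hH : ∀ t, H t = deriv a t / a t) {Lp Lm : ℝ}
    (hgp : Tendsto (fun t => H t / a t) atTop (𝓝 Lp))
    (hgm : Tendsto (fun t => H t / a t) atBot (𝓝 Lm))
    (hint : Integrable fun t => (H t / a t) ^ 2 * a t) :
    Tendsto (fun p : ℝ × ℝ => ∫ t in p.1..p.2, (-2 * deriv H t) / a t) (atBot ×ˢ atTop)
      (𝓝 (2 * Lm - 2 * Lp - 2 * ∫ t, (H t / a t) ^ 2 * a t)) := by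
  simp_rw [intervalIntegral_anec_eq ha hpos hH]
  exact (tendsto_anec_boundary_term hgp hgm).sub
    ((intervalIntegral_tendsto_integral hint tendsto_fst tendsto_snd).const_mul 2)

end FlatFRW

/-- Theorem 4.3: if a non-static flat FRW spacetime with regular affine ends has affine
ANEC limit `l ≥ 0` (allowing `l = +∞`), then it is null-incomplete in at least one time
direction, i.e. one of the affine lengths `∫_0^T a` or `∫_{−T}^0 a` stays bounded. -/
theorem flat_ANEC_forces_null_incompleteness
    (a H : ℝ → ℝ) (ha : ContDiff ℝ 2 a) (hpos : ∀ t, 0 < a t)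
    (hH : ∀ t, H t = deriv a t / a t)
    (hns : ∃ t, H t ≠ 0)
    (hlimp : ∃ Lp : ℝ, Tendsto (fun t => H t / a t) atTop (nhds Lp))
    (hlimm : ∃ Lm : ℝ, Tendsto (fun t => H t / a t) atBot (nhds Lm))
    (l : EReal)
    (hconv : Tendsto (fun p : ℝ × ℝ =>
          ((∫ t in p.1..p.2, (-2 * deriv H t) / a t : ℝ) : EReal))
        (atBot ×ˢ atTop) (nhds l))
    (hl : 0 ≤ l) :
    (∃ M : ℝ, ∀ T : ℝ, (∫ t in (0:ℝ)..T, a t) ≤ M) ∨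
    (∃ M : ℝ, ∀ T : ℝ, (∫ t in (-T)..(0:ℝ), a t) ≤ M) := by
  by_contra hcomplete
  obtain ⟨hfuture, hpast⟩ := not_or.1 hcomplete
  obtain ⟨Lp, hgp⟩ := hlimp
  obtain ⟨Lm, hgm⟩ := hlimm
  have ha0 : 0 ≤ a := fun t => (hpos t).le
  have hmeas : ∀ F, StronglyMeasurableAtFilter a F := ha.continuous.stronglyMeasurableAtFilter _
  have hint := integrable_of_tendsto_anec ha hpos hH hgp hgm hconv (EReal.bot_lt_zero.trans_le hl)
  have hLp : Lp = 0 := by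
    by_contra hLp
    exact hfuture <| exists_forall_intervalIntegral_le_of_integrableAtFilter_atTop
      ha.continuous ha0 <| integrableAtFilter_of_tendsto_ne_zero hgp hLp (hmeas _)
        (hint.integrableAtFilter _)
  have hLm : Lm = 0 := by
    by_contra hLm
    exact hpast <| exists_forall_intervalIntegral_le_of_integrableAtFilter_atBot
      ha.continuous ha0 <| integrableAtFilter_of_tendsto_ne_zero hgm hLm (hmeas _)
        (hint.integrableAtFilter _)
  have hlim := tendsto_nhds_unique hconv
    (EReal.tendsto_coe.2 (tendsto_intervalIntegral_anec ha hpos hH hgp hgm hint))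
  rw [hlim, hLp, hLm, EReal.coe_nonneg] at hl
  have hzero := eq_zero_of_integral_nonpos (μ := volume)
    (continuous_div_sq_mul_of_eq_deriv_div ha hpos hH)
    (fun t => mul_nonneg (sq_nonneg _) (hpos t).le) hint (by linarith)
  obtain ⟨t, ht⟩ := hns
  simpa [(hpos t).ne', ht] using congrFun hzero t
end

section
/- Let a : ℝ → ℝ be twice continuously differentiable with a(t) > 0 for all t and H(t) = a'(t)/a(t). Suppose H(t)/a(t) tends to finite limits as t → ±∞, that ∫_{0}^{T} a(t) dt → +∞ and ∫_{−T}^{0} a(t) dt → +∞ as T → +∞ (null completeness in both directions), and that the finite-interval integrals I(T₋,T₊) = ∫_{T₋}^{T₊} (−2H'(t))/a(t) dt converge to 0 as T₋ → −∞ and T₊ → +∞. Then H(t) = 0 for all t, and a is a constant function. -/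
/-!
With `F = H / a` one has `F' = H' / a - H² / a`, so the ANEC integral over `[x, y]` equals
`-2 (F y - F x) - 2 ∫_x^y H² / a`. As `F` has limits at both ends, the nonnegative density
`H² / a = F² a` is integrable on `ℝ`. Since `∫ a` diverges at both ends, integrability of `F² a`
forces both limits of `F` to vanish; then `∫ H² / a = 0`, so `H ≡ 0` and `a' = H a ≡ 0`.
-/

open Filter MeasureTheory Set Topology

theorem integrable_of_tendsto_intervalIntegral_of_nonneg {f : ℝ → ℝ} {L : ℝ}
    (hf : Continuous f) (hf0 : ∀ t, 0 ≤ f t)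
    (h : Tendsto (fun p : ℝ × ℝ => ∫ t in p.1..p.2, f t) (atBot ×ˢ atTop) (𝓝 L)) :
    Integrable f ∧ ∫ t, f t = L := by
  have hint : Integrable f :=
    integrable_of_intervalIntegral_norm_tendsto L
      (fun _ => hf.integrableOn_Ioc) tendsto_fst tendsto_snd
      (by simpa only [Real.norm_of_nonneg (hf0 _)] using h)
  exact ⟨hint, tendsto_nhds_unique
    (intervalIntegral_tendsto_integral hint tendsto_fst tendsto_snd) h⟩

theorem Continuous.eq_zero_of_integral_eq_zero_of_nonneg {X : Type*} [TopologicalSpace X]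
    [MeasurableSpace X] {μ : Measure X} [μ.IsOpenPosMeasure] {f : X → ℝ} (hf : Continuous f)
    (hf0 : 0 ≤ f) (hfi : Integrable f μ) (h : ∫ x, f x ∂μ = 0) : f = 0 :=
  (hf.ae_eq_iff_eq μ continuous_const).1 <| (integral_eq_zero_iff_of_nonneg hf0 hfi).1 h

theorem not_integrableOn_Ioi_of_tendsto_intervalIntegral_atTop {f : ℝ → ℝ} {T : ℝ}
    (hf : IntervalIntegrable f volume 0 T)
    (h : Tendsto (fun b => ∫ t in (0 : ℝ)..b, f t) atTop atTop) :
    ¬ IntegrableOn f (Ioi T) := by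
  intro hT
  have hlim : Tendsto (fun b => (∫ t in (0 : ℝ)..T, f t) + ∫ t in T..b, f t) atTop
      (𝓝 ((∫ t in (0 : ℝ)..T, f t) + ∫ t in Ioi T, f t)) :=
    (intervalIntegral_tendsto_integral_Ioi T hT tendsto_id).const_add _
  refine not_tendsto_nhds_of_tendsto_atTop h _ (hlim.congr' ?_)
  filter_upwards [eventually_ge_atTop T] with b hb
  exact intervalIntegral.integral_add_adjacent_intervals hf
    ((intervalIntegrable_iff_integrableOn_Ioc_of_le hb).2 (hT.mono_set Ioc_subset_Ioi_self))

theorem eq_zero_of_tendsto_atTop_of_integrable_sq_mul {f a : ℝ → ℝ} {L : ℝ}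
    (hf : Tendsto f atTop (𝓝 L)) (ha : Continuous a) (ha0 : ∀ t, 0 ≤ a t)
    (hfa : Integrable (fun t => f t ^ 2 * a t))
    (hdiv : Tendsto (fun T => ∫ t in (0 : ℝ)..T, a t) atTop atTop) : L = 0 := by
  by_contra hL
  have hL2 : 0 < L ^ 2 := by positivity
  obtain ⟨T, hT⟩ := eventually_atTop.1 <|
    (hf.pow 2).eventually (lt_mem_nhds (half_lt_self hL2))
  refine not_integrableOn_Ioi_of_tendsto_intervalIntegral_atTop
    (ha.intervalIntegrable 0 T) hdiv (T := T) ?_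
  -- on `Ioi T` we have `f² > L² / 2`, hence `a ≤ (2 / L²) f² a`
  refine ((hfa.const_mul (2 / L ^ 2)).integrableOn).mono' ha.aestronglyMeasurable.restrict ?_
  refine (ae_restrict_mem measurableSet_Ioi).mono fun t ht => ?_
  rw [Real.norm_of_nonneg (ha0 t), ← mul_assoc]
  refine le_mul_of_one_le_left (ha0 t) ?_
  rw [div_mul_eq_mul_div, one_le_div hL2]
  linarith [hT t (le_of_lt ht)]

theorem eq_zero_of_tendsto_atBot_of_integrable_sq_mul {f a : ℝ → ℝ} {L : ℝ}
    (hf : Tendsto f atBot (𝓝 L)) (ha : Continuous a) (ha0 : ∀ t, 0 ≤ a t)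
    (hfa : Integrable (fun t => f t ^ 2 * a t))
    (hdiv : Tendsto (fun T => ∫ t in (-T)..(0 : ℝ), a t) atTop atTop) : L = 0 :=
  eq_zero_of_tendsto_atTop_of_integrable_sq_mul (f := fun t => f (-t)) (a := fun t => a (-t))
    (hf.comp tendsto_neg_atTop_atBot) (ha.comp continuous_neg) (fun t => ha0 (-t)) hfa.comp_neg
    (by simpa only [intervalIntegral.integral_comp_neg, neg_zero] using hdiv)

theorem integral_deriv_div_eq {a H : ℝ → ℝ} (ha : Differentiable ℝ a) (ha0 : ∀ t, a t ≠ 0)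
    (hda : ∀ t, deriv a t = H t * a t) (hH : Differentiable ℝ H)
    (hH' : Continuous (deriv H)) (x y : ℝ) :
    ∫ t in x..y, deriv H t / a t = H y / a y - H x / a x + ∫ t in x..y, H t ^ 2 / a t := by
  have hderiv : ∀ t, HasDerivAt (fun s => H s / a s) (deriv H t / a t - H t ^ 2 / a t) t := by
    intro t
    refine ((hH t).hasDerivAt.div (ha t).hasDerivAt (ha0 t)).congr_deriv ?_
    rw [hda t]
    field_simp [ha0 t]
  have hcont : Continuous fun t => H t ^ 2 / a t :=
    (hH.continuous.pow 2).div ha.continuous ha0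
  have hcont' : Continuous fun t => deriv H t / a t := hH'.div ha.continuous ha0
  have hftc := intervalIntegral.integral_eq_sub_of_hasDerivAt (fun t _ => hderiv t)
    ((hcont'.sub hcont).intervalIntegrable x y)
  rw [intervalIntegral.integral_sub (hcont'.intervalIntegrable x y)
    (hcont.intervalIntegrable x y)] at hftc
  linarith

theorem tendsto_integral_sq_div {a H : ℝ → ℝ} {Lp Lm : ℝ} (ha : Differentiable ℝ a)
    (ha0 : ∀ t, a t ≠ 0) (hda : ∀ t, deriv a t = H t * a t) (hH : ContDiff ℝ 1 H)
    (hLp : Tendsto (fun t => H t / a t) atTop (𝓝 Lp))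
    (hLm : Tendsto (fun t => H t / a t) atBot (𝓝 Lm))
    (hzero : Tendsto (fun p : ℝ × ℝ => ∫ t in p.1..p.2, (-2 * deriv H t) / a t)
        (atBot ×ˢ atTop) (𝓝 0)) :
    Tendsto (fun p : ℝ × ℝ => ∫ t in p.1..p.2, H t ^ 2 / a t) (atBot ×ˢ atTop)
      (𝓝 (Lm - Lp)) := by
  have hlim := (hzero.const_mul (-2⁻¹)).sub ((hLp.comp tendsto_snd).sub (hLm.comp tendsto_fst))
  rw [mul_zero, zero_sub, neg_sub] at hlim
  refine hlim.congr fun p => ?_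
  simp only [Function.comp_apply, mul_div_assoc, intervalIntegral.integral_const_mul,
    integral_deriv_div_eq ha ha0 hda (hH.differentiable one_ne_zero) (hH.continuous_deriv le_rfl)]
  ring

/-- Corollary 4.6 (rigidity of the saturated flat case): a null-complete flat FRW
spacetime with regular affine ends and vanishing affine ANEC is static:
`H ≡ 0` and `a` is constant. -/
theorem flat_ANEC_saturation_rigidity
    (a H : ℝ → ℝ) (ha : ContDiff ℝ 2 a) (hpos : ∀ t, 0 < a t)
    (hH : ∀ t, H t = deriv a t / a t)
    (hlimp : ∃ Lp : ℝ, Tendsto (fun t => H t / a t) atTop (nhds Lp))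
    (hlimm : ∃ Lm : ℝ, Tendsto (fun t => H t / a t) atBot (nhds Lm))
    (hfut : Tendsto (fun T => ∫ t in (0:ℝ)..T, a t) atTop atTop)
    (hpast : Tendsto (fun T => ∫ t in (-T)..(0:ℝ), a t) atTop atTop)
    (hzero : Tendsto (fun p : ℝ × ℝ => ∫ t in p.1..p.2, (-2 * deriv H t) / a t)
        (atBot ×ˢ atTop) (nhds 0)) :
    (∀ t, H t = 0) ∧ (∃ C : ℝ, ∀ t, a t = C) := by
  obtain ⟨Lp, hLp⟩ := hlimp
  obtain ⟨Lm, hLm⟩ := hlimm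
  have ha0 : ∀ t, a t ≠ 0 := fun t => (hpos t).ne'
  have haD : Differentiable ℝ a := ha.differentiable (by norm_num)
  have hHC : ContDiff ℝ 1 H := by
    rw [show H = fun t => deriv a t / a t from funext hH]
    exact ha.deriv'.div (ha.of_le (by norm_num)) ha0
  have hda : ∀ t, deriv a t = H t * a t := fun t => by rw [hH, div_mul_cancel₀ _ (ha0 t)]
  have hq : ∀ t, H t ^ 2 / a t = (H t / a t) ^ 2 * a t := fun t => by field_simp [ha0 t]
  have hqC : Continuous fun t => H t ^ 2 / a t := (hHC.continuous.pow 2).div haD.continuous ha0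
  have hqnonneg : ∀ t, 0 ≤ H t ^ 2 / a t := fun t => div_nonneg (sq_nonneg _) (hpos t).le
  obtain ⟨hqint, hqval⟩ := integrable_of_tendsto_intervalIntegral_of_nonneg hqC
    hqnonneg (tendsto_integral_sq_div haD ha0 hda hHC hLp hLm hzero)
  have hqint' : Integrable fun t => (H t / a t) ^ 2 * a t := by simpa only [hq] using hqint
  have hLp0 := eq_zero_of_tendsto_atTop_of_integrable_sq_mul hLp haD.continuous
    (fun t => (hpos t).le) hqint' hfut
  have hLm0 := eq_zero_of_tendsto_atBot_of_integrable_sq_mul hLm haD.continuous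
    (fun t => (hpos t).le) hqint' hpast
  have hq0 : (fun t => H t ^ 2 / a t) = 0 :=
    hqC.eq_zero_of_integral_eq_zero_of_nonneg hqnonneg hqint (by rw [hqval, hLp0, hLm0, sub_zero])
  have hH0 : ∀ t, H t = 0 := fun t => by
    simpa [ha0 t] using congrFun hq0 t
  refine ⟨hH0, a 0, fun t => is_const_of_deriv_eq_zero haD (fun s => ?_) t 0⟩
  rw [hda, hH0, zero_mul]
end

section
/- Let a : ℝ → ℝ be twice continuously differentiable with constants 0 < a_min ≤ a(t) ≤ a_max < ∞ for all t, and let H(t) = a'(t)/a(t) satisfy |H(t)| ≤ C and |H'(t)| ≤ C for all t for some constant C. Define I(T₋,T₊) = ∫_{T₋}^{T₊} (−2H'(t))/a(t) dt. Then: (i) if ∫_{T₋}^{T₊} H²/a dt → +∞ as T₋ → −∞, T₊ → +∞, then I(T₋,T₊) → −∞; (ii) if instead ∫_ℝ H²/a < ∞, then H(t) → 0 as t → ±∞ and I(T₋,T₊) converges to −2·∫_ℝ H(t)²/a(t) dt, which is strictly negative unless H is identically zero. -/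
/-!
Since `a' = H a`, the integrand satisfies `H' / a = (H / a)' + H² / a`, so the ANEC integral over
`[T₋, T₊]` is `-2 ∫ H² / a` plus the boundary term `-2 [H / a]`, which is bounded by `4 C / a_min`;
this gives (i). In case (ii), `H²` is integrable (as `a ≤ a_max`) and uniformly continuous (as `H`
and `H'` are bounded), so by Barbalat's lemma `H → 0` at `±∞` and the boundary term disappears in
the limit.
-/

open Filter MeasureTheory Set Topology

section Barbalat

variable {E : Type*} [NormedAddCommGroup E] {g : ℝ → E}

theorem MeasureTheory.Integrable.tendsto_intervalIntegral_self_add_atTop [NormedSpace ℝ E]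
    (hg : Integrable g) (δ : ℝ) :
    Tendsto (fun t => ∫ s in t..t + δ, g s) atTop (𝓝 0) := by
  have hF := intervalIntegral_tendsto_integral_Ioi 0 hg.integrableOn tendsto_id
  have hFδ := intervalIntegral_tendsto_integral_Ioi 0 hg.integrableOn
    (tendsto_atTop_add_const_right _ δ tendsto_id)
  simpa only [id, sub_self, intervalIntegral.integral_interval_sub_left
    hg.intervalIntegrable hg.intervalIntegrable] using hFδ.sub hF

theorem UniformContinuous.tendsto_atTop_zero_of_integrable
    (hu : UniformContinuous g) (hi : Integrable g) : Tendsto g atTop (𝓝 0) := by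
  rw [tendsto_zero_iff_norm_tendsto_zero]
  refine Metric.tendsto_nhds.2 fun ε hε => ?_
  obtain ⟨δ, hδ, hclose⟩ := Metric.uniformContinuous_iff.1 hu (ε / 2) (half_pos hε)
  have hnorm_le : ∀ t, δ / 2 * ‖g t‖ ≤ (∫ s in t..t + δ / 2, ‖g s‖) + δ / 2 * (ε / 2) := by
    intro t
    have hle : ∀ s ∈ Icc t (t + δ / 2), ‖g t‖ ≤ ‖g s‖ + ε / 2 := fun s hs => by
      have hst : dist s t < δ := by
        rw [Real.dist_eq, abs_of_nonneg (by linarith [hs.1])]; linarith [hs.2]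
      have hgst := hclose hst
      rw [dist_comm, dist_eq_norm] at hgst
      linarith [norm_le_norm_add_norm_sub' (g t) (g s)]
    have := intervalIntegral.integral_mono_on (by linarith) intervalIntegrable_const
      ((hi.norm.intervalIntegrable).add intervalIntegrable_const) hle
    rw [intervalIntegral.integral_add hi.norm.intervalIntegrable intervalIntegrable_const] at this
    simp only [intervalIntegral.integral_const, smul_eq_mul, add_sub_cancel_left] at this
    linarith
  have hsmall := (hi.norm.tendsto_intervalIntegral_self_add_atTop (δ / 2)).eventually
    (gt_mem_nhds (show (0:ℝ) < δ / 2 * (ε / 2) by positivity))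
  filter_upwards [hsmall] with t ht
  rw [Real.dist_eq, sub_zero, abs_norm]
  nlinarith [hnorm_le t]

theorem UniformContinuous.tendsto_atBot_zero_of_integrable
    (hu : UniformContinuous g) (hi : Integrable g) : Tendsto g atBot (𝓝 0) := by
  have := (hu.comp uniformContinuous_neg).tendsto_atTop_zero_of_integrable hi.comp_neg
  simpa [Function.comp_def] using this.comp tendsto_neg_atBot_atTop

end Barbalat

theorem tendsto_zero_of_integrable_sq {f f' : ℝ → ℝ} {C : ℝ}
    (hf : ∀ t, HasDerivAt f (f' t) t) (hfC : ∀ t, |f t| ≤ C) (hf'C : ∀ t, |f' t| ≤ C)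
    (hi : Integrable fun t => f t ^ 2) :
    Tendsto f atTop (𝓝 0) ∧ Tendsto f atBot (𝓝 0) := by
  have hC : 0 ≤ C := (abs_nonneg _).trans (hfC 0)
  have hsq : ∀ t, HasDerivAt (fun s => f s ^ 2) (2 * f t * f' t) t := fun t =>
    ((hf t).fun_pow 2).congr_deriv (by norm_num)
  have hlip : LipschitzWith (2 * C * C).toNNReal fun t => f t ^ 2 :=
    lipschitzWith_of_nnnorm_deriv_le (fun t => (hsq t).differentiableAt) fun t => by
      rw [Real.le_toNNReal_iff_coe_le (by positivity), coe_nnnorm, (hsq t).deriv,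
        Real.norm_eq_abs, abs_mul, abs_mul, abs_two]
      exact mul_le_mul (mul_le_mul_of_nonneg_left (hfC t) zero_le_two) (hf'C t)
        (abs_nonneg _) (by positivity)
  have hroot : ∀ {l : Filter ℝ}, Tendsto (fun t => f t ^ 2) l (𝓝 0) → Tendsto f l (𝓝 0) :=
    fun h => (tendsto_zero_iff_abs_tendsto_zero f).2 <| by
      simpa [Function.comp_def, Real.sqrt_sq_eq_abs] using h.sqrt
  exact ⟨hroot (hlip.uniformContinuous.tendsto_atTop_zero_of_integrable hi),
    hroot (hlip.uniformContinuous.tendsto_atBot_zero_of_integrable hi)⟩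

section LogDeriv

variable {a H H' : ℝ → ℝ}

theorem hasDerivAt_div_of_hasDerivAt_eq_mul {t : ℝ} (ha : HasDerivAt a (H t * a t) t)
    (hH : HasDerivAt H (H' t) t) (hat : a t ≠ 0) :
    HasDerivAt (fun s => H s / a s) (H' t / a t - H t ^ 2 / a t) t := by
  refine (hH.fun_div ha hat).congr_deriv ?_
  field_simp

theorem integral_deriv_div_eq_of_hasDerivAt_eq_mul (ha : ∀ t, HasDerivAt a (H t * a t) t)
    (hH : ∀ t, HasDerivAt H (H' t) t) (ha0 : ∀ t, a t ≠ 0) (hH' : Continuous H') (T U : ℝ) :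
    ∫ t in T..U, H' t / a t = H U / a U - H T / a T + ∫ t in T..U, H t ^ 2 / a t := by
  have hac : Continuous a := continuous_iff_continuousAt.2 fun t => (ha t).continuousAt
  have hHc : Continuous H := continuous_iff_continuousAt.2 fun t => (hH t).continuousAt
  have hsq : Continuous fun t => H t ^ 2 / a t := (hHc.pow 2).div hac ha0
  have hH'a : Continuous fun t => H' t / a t := hH'.div hac ha0
  have hftc := intervalIntegral.integral_eq_sub_of_hasDerivAt
    (fun t _ => hasDerivAt_div_of_hasDerivAt_eq_mul (ha t) (hH t) (ha0 t))
    ((hH'a.sub hsq).intervalIntegrable T U)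
  rw [intervalIntegral.integral_sub (hH'a.intervalIntegrable T U)
    (hsq.intervalIntegrable T U)] at hftc
  linarith

end LogDeriv

theorem abs_div_le_abs_div_of_le {x b m : ℝ} (hm : 0 < m) (hb : m ≤ b) : |x / b| ≤ |x| / m := by
  rw [abs_div, abs_of_pos (hm.trans_le hb)]
  exact div_le_div_of_nonneg_left (abs_nonneg x) hm hb

theorem Filter.Tendsto.div_of_le {α : Type*} {l : Filter α} {f g : α → ℝ} {m : ℝ}
    (hf : Tendsto f l (𝓝 0)) (hm : 0 < m) (hg : ∀ x, m ≤ g x) :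
    Tendsto (fun x => f x / g x) l (𝓝 0) :=
  squeeze_zero_norm (fun x => abs_div_le_abs_div_of_le hm (hg x))
    (by simpa using hf.abs.div_const m)

theorem MeasureTheory.Integrable.of_div {α : Type*} [MeasurableSpace α] {μ : Measure α}
    {f a : α → ℝ} {M : ℝ} (hf : Integrable (fun x => f x / a x) μ)
    (ha : AEStronglyMeasurable a μ) (ha0 : ∀ x, a x ≠ 0) (haM : ∀ x, |a x| ≤ M) :
    Integrable f μ :=
  (hf.bdd_mul ha (ae_of_all _ haM)).congr (ae_of_all _ fun x => mul_div_cancel₀ _ (ha0 x))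

/-- Bounded oscillatory flat FRW models do not evade the ANEC obstruction:
(i) if the bulk integral `∫ H²/a` diverges then the finite-interval ANEC integrals tend
to `−∞`; (ii) if `∫_ℝ H²/a < ∞` then `H → 0` at both ends and the ANEC integrals
converge to `−2 ∫_ℝ H²/a`, which is strictly negative unless `H ≡ 0`. -/
theorem bounded_oscillatory_flat_ANEC_obstruction
    (a H : ℝ → ℝ) (a_min a_max C : ℝ) (ha : ContDiff ℝ 2 a)
    (hmin : 0 < a_min) (hbound : ∀ t, a_min ≤ a t ∧ a t ≤ a_max)
    (hH : ∀ t, H t = deriv a t / a t)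
    (hHb : ∀ t, |H t| ≤ C) (hH'b : ∀ t, |deriv H t| ≤ C) :
    (Tendsto (fun p : ℝ × ℝ => ∫ t in p.1..p.2, (H t) ^ 2 / a t)
        (atBot ×ˢ atTop) atTop →
      Tendsto (fun p : ℝ × ℝ => ∫ t in p.1..p.2, (-2 * deriv H t) / a t)
        (atBot ×ˢ atTop) atBot) ∧
    (Integrable (fun t => (H t) ^ 2 / a t) →
      (Tendsto H atTop (nhds 0) ∧ Tendsto H atBot (nhds 0) ∧
        Tendsto (fun p : ℝ × ℝ => ∫ t in p.1..p.2, (-2 * deriv H t) / a t)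
          (atBot ×ˢ atTop) (nhds (-2 * ∫ t : ℝ, (H t) ^ 2 / a t)) ∧
        ((∃ t, H t ≠ 0) → -2 * (∫ t : ℝ, (H t) ^ 2 / a t) < 0))) := by
  have hapos : ∀ t, 0 < a t := fun t => hmin.trans_le (hbound t).1
  have hHC1 : ContDiff ℝ 1 H := by
    rw [show H = fun t => deriv a t / a t from funext hH]
    exact (ha.deriv' (n := 1)).div (ha.of_le one_le_two) fun t => (hapos t).ne'
  have hHderiv : ∀ t, HasDerivAt H (deriv H t) t :=
    fun t => (hHC1.differentiable one_ne_zero t).hasDerivAt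
  have haderiv : ∀ t, HasDerivAt a (H t * a t) t := fun t => by
    rw [hH, div_mul_cancel₀ _ (hapos t).ne']
    exact (ha.differentiable two_ne_zero t).hasDerivAt
  have hI : ∀ p : ℝ × ℝ, ∫ t in p.1..p.2, (-2 * deriv H t) / a t =
      -2 * (H p.2 / a p.2 - H p.1 / a p.1) + -2 * ∫ t in p.1..p.2, H t ^ 2 / a t := fun p => by
    simp_rw [mul_div_assoc, intervalIntegral.integral_const_mul,
      integral_deriv_div_eq_of_hasDerivAt_eq_mul haderiv hHderiv (fun t => (hapos t).ne')
        (hHC1.continuous_deriv le_rfl)]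
    ring
  refine ⟨fun hbulk => ?_, fun hint => ?_⟩
  · have hG : ∀ t, |H t / a t| ≤ C / a_min := fun t =>
      (abs_div_le_abs_div_of_le hmin (hbound t).1).trans
        (div_le_div_of_nonneg_right (hHb t) hmin.le)
    have hboundary : ∀ p : ℝ × ℝ, -2 * (H p.2 / a p.2 - H p.1 / a p.1) ≤ 4 * (C / a_min) :=
      fun p => by linarith [abs_le.1 (hG p.1), abs_le.1 (hG p.2)]
    simpa only [← hI] using tendsto_atBot_add_left_of_ge _ _ hboundary
      (hbulk.const_mul_atTop_of_neg (by norm_num : (-2 : ℝ) < 0))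
  · have hH2 : Integrable fun t => H t ^ 2 :=
      hint.of_div ha.continuous.aestronglyMeasurable (fun t => (hapos t).ne')
        fun t => (abs_of_pos (hapos t)).trans_le (hbound t).2
    obtain ⟨htop, hbot⟩ := tendsto_zero_of_integrable_sq hHderiv hHb hH'b hH2
    have hboundary : Tendsto (fun p : ℝ × ℝ => H p.2 / a p.2 - H p.1 / a p.1)
        (atBot ×ˢ atTop) (𝓝 0) := by
      simpa using ((htop.div_of_le hmin fun t => (hbound t).1).comp tendsto_snd).sub
        ((hbot.div_of_le hmin fun t => (hbound t).1).comp tendsto_fst)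
    have hbulk := intervalIntegral_tendsto_integral hint tendsto_fst tendsto_snd
    refine ⟨htop, hbot, ?_, fun ⟨t₀, ht₀⟩ => ?_⟩
    · simpa only [← hI, mul_zero, zero_add] using
        (hboundary.const_mul (-2)).add (hbulk.const_mul (-2))
    · have hpos : 0 < ∫ t, H t ^ 2 / a t := integral_pos_of_integrable_nonneg_nonzero (x := t₀)
        (((hHC1.continuous.pow 2).div ha.continuous) fun t => (hapos t).ne') hint
        (fun t => div_nonneg (sq_nonneg _) (hapos t).le)
        (div_ne_zero (pow_ne_zero 2 ht₀) (hapos t₀).ne')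
      linarith
end

section
/- Let a : ℝ → ℝ be twice continuously differentiable with a(t) > 0 for all t, let H(t) = a'(t)/a(t) satisfy |H(t)| ≤ H_max for all t, and suppose ∫_ℝ a(t)^{−3} dt < ∞ and ∫_ℝ H(t)²/a(t) dt < ∞. Then a(t) → +∞ as t → +∞ and as t → −∞, H(t)/a(t) → 0 as t → ±∞, and the closed-FRW finite-interval ANEC integrals I(T₋,T₊) = ∫_{T₋}^{T₊} (−2·(H'(t) − 1/a(t)²))/a(t) dt converge to a finite limit as T₋ → −∞ and T₊ → +∞, namely 2·∫_ℝ (1/a(t)³ − H(t)²/a(t)) dt. -/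
/-!
Since `(log a)' = H` is bounded by `K`, `a` varies by at most a factor `e^K` on every unit
interval, so `a(t)⁻³ ≤ e^{3K} ∫_t^{t+1} a⁻³`; integrability of `a⁻³` makes the right-hand side
vanish at `±∞`, hence `a → ∞` and `H/a → 0` there. On a finite interval,
`-2 (H' - a⁻²)/a = -2 (H/a)' + 2 (a⁻³ - H²/a)`, so the ANEC integral is the boundary term
`-2 [H/a]` plus `2 ∫ (a⁻³ - H²/a)`, and the boundary term dies in the limit.
-/

open Filter MeasureTheory Set Topology

theorem tendsto_intervalIntegral_add_one_zero {f : ℝ → ℝ} {l : Filter ℝ}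
    [l.IsCountablyGenerated] (hl : l ≤ cocompact ℝ) (hf : Integrable f) :
    Tendsto (fun t => ∫ x in t..t + 1, f x) l (𝓝 0) := by
  have hIoc : ∀ t, ∫ x in t..t + 1, f x = ∫ x, (Ioc t (t + 1)).indicator f x := fun t => by
    rw [intervalIntegral.integral_of_le (by linarith), integral_indicator measurableSet_Ioc]
  simp_rw [hIoc]
  rw [← integral_zero ℝ ℝ]
  refine tendsto_integral_filter_of_dominated_convergence (fun x => ‖f x‖)
    (Eventually.of_forall fun t => hf.1.indicator measurableSet_Ioc)
    (Eventually.of_forall fun t => Eventually.of_forall fun x => norm_indicator_le_norm_self _ _)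
    hf.norm (Eventually.of_forall fun x => tendsto_const_nhds.congr' ?_)
  filter_upwards [hl (isCompact_Icc (a := x - 1) (b := x)).compl_mem_cocompact] with t ht
  refine (indicator_of_notMem (fun hx => ht ⟨?_, ?_⟩) f).symm <;> linarith [hx.1, hx.2]

theorem tendsto_zero_of_integrable_of_le_mul {f : ℝ → ℝ} {C : ℝ} {l : Filter ℝ}
    [l.IsCountablyGenerated] (hl : l ≤ cocompact ℝ) (hf : Integrable f) (hf0 : ∀ t, 0 ≤ f t)
    (hC : ∀ t, ∀ x ∈ Icc t (t + 1), f t ≤ C * f x) : Tendsto f l (𝓝 0) := by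
  have hwindow : ∀ t, f t ≤ C * ∫ x in t..t + 1, f x := fun t => by
    have := intervalIntegral.integral_mono_on (by linarith) intervalIntegrable_const
      (hf.intervalIntegrable.const_mul C) (hC t)
    simpa [intervalIntegral.integral_const_mul] using this
  have hlim := (tendsto_intervalIntegral_add_one_zero hl hf).const_mul C
  rw [mul_zero] at hlim
  exact tendsto_of_tendsto_of_tendsto_of_le_of_le tendsto_const_nhds hlim hf0 hwindow

section LogDeriv

variable {a H : ℝ → ℝ}

theorem le_mul_exp_of_hasDerivAt_mul_self {K : ℝ} (hpos : ∀ t, 0 < a t)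
    (ha : ∀ t, HasDerivAt a (H t * a t) t) (hHK : ∀ t, |H t| ≤ K) (s t : ℝ) :
    a s ≤ a t * Real.exp (K * |s - t|) := by
  have hlog : ∀ t, HasDerivAt (fun s => Real.log (a s)) (H t) t := fun t => by
    simpa [(hpos t).ne'] using (ha t).log (hpos t).ne'
  have hlip : Real.log (a s) - Real.log (a t) ≤ K * |s - t| := by
    have := Convex.norm_image_sub_le_of_norm_deriv_le (fun x _ => (hlog x).differentiableAt)
      (fun x _ => by rw [(hlog x).deriv]; exact hHK x) convex_univ (mem_univ t) (mem_univ s)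
    exact (le_abs_self _).trans (by simpa [Real.norm_eq_abs] using this)
  calc a s = Real.exp (Real.log (a s)) := (Real.exp_log (hpos s)).symm
    _ ≤ Real.exp (Real.log (a t) + K * |s - t|) := Real.exp_le_exp.2 (by linarith)
    _ = a t * Real.exp (K * |s - t|) := by rw [Real.exp_add, Real.exp_log (hpos t)]

theorem tendsto_atTop_of_integrable_one_div_pow {K : ℝ} {n : ℕ} {l : Filter ℝ}
    [l.IsCountablyGenerated] (hl : l ≤ cocompact ℝ) (hn : n ≠ 0) (hpos : ∀ t, 0 < a t)
    (ha : ∀ t, HasDerivAt a (H t * a t) t) (hHK : ∀ t, |H t| ≤ K)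
    (hint : Integrable fun t => 1 / a t ^ n) : Tendsto a l atTop := by
  have hK : 0 ≤ K := (abs_nonneg _).trans (hHK 0)
  have hC : ∀ t, ∀ x ∈ Icc t (t + 1), 1 / a t ^ n ≤ Real.exp K ^ n * (1 / a x ^ n) := by
    intro t x hx
    have hax : a x ≤ a t * Real.exp K := by
      refine (le_mul_exp_of_hasDerivAt_mul_self hpos ha hHK x t).trans ?_
      gcongr
      · exact (hpos t).le
      · exact mul_le_of_le_one_right hK (abs_le.2 ⟨by linarith [hx.1], by linarith [hx.2]⟩)
    have := hpos x
    calc 1 / a t ^ n = Real.exp K ^ n * (1 / (a t * Real.exp K) ^ n) := by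
          rw [mul_pow]; field_simp
      _ ≤ Real.exp K ^ n * (1 / a x ^ n) := by gcongr
  have hinv : Tendsto (fun t => 1 / a t ^ n) l (𝓝[>] 0) :=
    tendsto_nhdsWithin_iff.2 ⟨tendsto_zero_of_integrable_of_le_mul hl hint
      (fun t => by have := hpos t; positivity) hC,
      Eventually.of_forall fun t => by have := hpos t; simp only [mem_Ioi]; positivity⟩
  have hpow : Tendsto (fun t => a t ^ n) l atTop :=
    hinv.inv_tendsto_nhdsGT_zero.congr fun t => by simp
  rw [tendsto_atTop] at hpow ⊢
  intro M
  filter_upwards [hpow (max M 1 ^ n)] with t ht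
  exact (le_max_left M 1).trans ((pow_le_pow_iff_left₀ (by positivity) (hpos t).le hn).1 ht)

theorem hasDerivAt_div_of_hasDerivAt_mul_self {t : ℝ} (hat : a t ≠ 0)
    (ha : HasDerivAt a (H t * a t) t) (hH : DifferentiableAt ℝ H t) :
    HasDerivAt (fun s => H s / a s) (deriv H t / a t - H t ^ 2 / a t) t :=
  (hH.hasDerivAt.div ha hat).congr_deriv (by field_simp)

theorem intervalIntegral_anec_eq_boundary_add {T₁ T₂ : ℝ} (hpos : ∀ t, a t ≠ 0)
    (ha : ∀ t, HasDerivAt a (H t * a t) t) (hH : ContDiff ℝ 1 H) :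
    ∫ t in T₁..T₂, (-2 * (deriv H t - 1 / a t ^ 2)) / a t =
      -2 * (H T₂ / a T₂ - H T₁ / a T₁) + 2 * ∫ t in T₁..T₂, (1 / a t ^ 3 - H t ^ 2 / a t) := by
  have hac : Continuous a := continuous_iff_continuousAt.2 fun t => (ha t).continuousAt
  have hHc : Continuous H := hH.continuous
  have hφ' : IntervalIntegrable (fun t => deriv H t / a t - H t ^ 2 / a t) volume T₁ T₂ :=
    (((hH.continuous_deriv le_rfl).div hac hpos).sub
      ((hHc.pow 2).div hac hpos)).intervalIntegrable _ _
  have hg : IntervalIntegrable (fun t => 1 / a t ^ 3 - H t ^ 2 / a t) volume T₁ T₂ :=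
    ((continuous_const.div (hac.pow 3) fun t => pow_ne_zero 3 (hpos t)).sub
      ((hHc.pow 2).div hac hpos)).intervalIntegrable _ _
  calc ∫ t in T₁..T₂, (-2 * (deriv H t - 1 / a t ^ 2)) / a t
      = ∫ t in T₁..T₂, (-2 * (deriv H t / a t - H t ^ 2 / a t) +
          2 * (1 / a t ^ 3 - H t ^ 2 / a t)) :=
        intervalIntegral.integral_congr fun t _ => by have := hpos t; field_simp; ring
    _ = -2 * (∫ t in T₁..T₂, (deriv H t / a t - H t ^ 2 / a t)) +
          2 * ∫ t in T₁..T₂, (1 / a t ^ 3 - H t ^ 2 / a t) := by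
        rw [intervalIntegral.integral_add (hφ'.const_mul _) (hg.const_mul _),
          intervalIntegral.integral_const_mul, intervalIntegral.integral_const_mul]
    _ = _ := by
        rw [intervalIntegral.integral_eq_sub_of_hasDerivAt (fun t _ =>
          hasDerivAt_div_of_hasDerivAt_mul_self (hpos t) (ha t)
            (hH.differentiable one_ne_zero t)) hφ']

end LogDeriv

theorem tendsto_div_zero_of_abs_le_of_tendsto_atTop {α : Type*} {f g : α → ℝ} {K : ℝ}
    {l : Filter α} (hf : ∀ x, |f x| ≤ K) (hg : Tendsto g l atTop) :
    Tendsto (fun x => f x / g x) l (𝓝 0) := by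
  simp_rw [div_eq_mul_inv]
  exact isBoundedUnder_le_mul_tendsto_zero ⟨K, eventually_map.2 (Eventually.of_forall hf)⟩
    (tendsto_inv_atTop_zero.comp hg)

/-- Theorem 5.1(b): in closed (`k = +1`) FRW with bounded `H`, if both `∫_ℝ a⁻³ < ∞` and
`∫_ℝ H²/a < ∞`, then `a → ∞` at both ends, `H/a → 0`, and the closed-branch
finite-interval ANEC integrals converge to the finite value `2 ∫_ℝ (a⁻³ − H²/a)`. -/
theorem closed_FRW_ANEC_finite
    (a H : ℝ → ℝ) (H_max : ℝ) (ha : ContDiff ℝ 2 a) (hpos : ∀ t, 0 < a t)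
    (hH : ∀ t, H t = deriv a t / a t) (hHb : ∀ t, |H t| ≤ H_max)
    (hint3 : Integrable (fun t => 1 / (a t) ^ 3))
    (hint : Integrable (fun t => (H t) ^ 2 / a t)) :
    Tendsto a atTop atTop ∧ Tendsto a atBot atTop ∧
    Tendsto (fun t => H t / a t) atTop (nhds 0) ∧
    Tendsto (fun t => H t / a t) atBot (nhds 0) ∧
    Tendsto (fun p : ℝ × ℝ =>
        ∫ t in p.1..p.2, (-2 * (deriv H t - 1 / (a t) ^ 2)) / a t)
      (atBot ×ˢ atTop)
      (nhds (2 * ∫ t : ℝ, (1 / (a t) ^ 3 - (H t) ^ 2 / a t))) := by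
  have hane : ∀ t, a t ≠ 0 := fun t => (hpos t).ne'
  have hda : ∀ t, HasDerivAt a (H t * a t) t := fun t => by
    rw [hH t, div_mul_cancel₀ _ (hane t)]
    exact (ha.differentiable (by norm_num) t).hasDerivAt
  have hH1 : ContDiff ℝ 1 H := by
    rw [funext hH]
    exact (ha.iterate_deriv' 1 1).div (ha.of_le (by norm_num)) hane
  have hatop := tendsto_atTop_of_integrable_one_div_pow atTop_le_cocompact three_ne_zero hpos
    hda hHb hint3
  have habot := tendsto_atTop_of_integrable_one_div_pow atBot_le_cocompact three_ne_zero hpos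
    hda hHb hint3
  have hφtop := tendsto_div_zero_of_abs_le_of_tendsto_atTop hHb hatop
  have hφbot := tendsto_div_zero_of_abs_le_of_tendsto_atTop hHb habot
  refine ⟨hatop, habot, hφtop, hφbot, ?_⟩
  simp_rw [intervalIntegral_anec_eq_boundary_add hane hda hH1]
  simpa using (((hφtop.comp tendsto_snd).sub (hφbot.comp tendsto_fst)).const_mul (-2)).add
    ((intervalIntegral_tendsto_integral (hint3.sub hint) tendsto_fst tendsto_snd).const_mul 2)
end

section
/- Let a : [t₀, ∞) → ℝ be continuously differentiable with a(t) > 0, and suppose |a'(t)/a(t)| ≤ H_max for all t ≥ t₀ and that a^{−3} is integrable on [t₀, ∞) (∫_{t₀}^∞ a(t)^{−3} dt < ∞). Then a(t) → +∞ as t → +∞. -/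
/-!
By the mean value theorem applied to `log a`, the bound `|a'/a| ≤ H` gives
`a s ≤ a t * exp H` for `s ∈ [t, t + 1]`, hence `a(t)⁻³ ≤ exp (3H) * ∫ₜ^{t+1} a⁻³`.
The right-hand side tends to `0` because `a⁻³` is integrable on `[t₀, ∞)`, so `a(t)⁻³ → 0`
and `a(t) → ∞`.
-/

open Filter MeasureTheory Set Real Topology

theorem abs_log_sub_log_le_of_abs_derivWithin_div_le {a : ℝ → ℝ} {D : Set ℝ} {H : ℝ}
    (hD : Convex ℝ D) (hda : DifferentiableOn ℝ a D) (hpos : ∀ t ∈ D, 0 < a t)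
    (hH : ∀ t ∈ D, |derivWithin a D t / a t| ≤ H) {s t : ℝ} (hs : s ∈ D) (ht : t ∈ D) :
    |log (a s) - log (a t)| ≤ H * |s - t| := by
  have hlog : ∀ x ∈ D, HasDerivWithinAt (fun t => log (a t)) (derivWithin a D x / a x) D x :=
    fun x hx => ((hda x hx).hasDerivWithinAt).log (hpos x hx).ne'
  simpa only [Real.norm_eq_abs] using hD.norm_image_sub_le_of_norm_hasDerivWithin_le hlog
    (by simpa only [Real.norm_eq_abs] using hH) ht hs

theorem le_mul_exp_of_abs_derivWithin_div_le {a : ℝ → ℝ} {D : Set ℝ} {H : ℝ}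
    (hD : Convex ℝ D) (hda : DifferentiableOn ℝ a D) (hpos : ∀ t ∈ D, 0 < a t)
    (hH : ∀ t ∈ D, |derivWithin a D t / a t| ≤ H) {s t : ℝ} (hs : s ∈ D) (ht : t ∈ D) :
    a s ≤ a t * exp (H * |s - t|) := by
  have hlog := (le_abs_self _).trans
    (abs_log_sub_log_le_of_abs_derivWithin_div_le hD hda hpos hH hs ht)
  calc a s = exp (log (a s)) := (exp_log (hpos s hs)).symm
    _ ≤ exp (log (a t) + H * |s - t|) := exp_le_exp.2 (by linarith)
    _ = a t * exp (H * |s - t|) := by rw [exp_add, exp_log (hpos t ht)]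

theorem tendsto_intervalIntegral_add_const_of_integrableOn_Ioi {E : Type*}
    [NormedAddCommGroup E] [NormedSpace ℝ E] {f : ℝ → E} {t₀ : ℝ} (c : ℝ)
    (hf : IntegrableOn f (Ioi t₀)) :
    Tendsto (fun t => ∫ s in t..t + c, f s) atTop (𝓝 0) := by
  have hlim := intervalIntegral_tendsto_integral_Ioi t₀ hf tendsto_id
  have hsub := (hlim.comp (tendsto_atTop_add_const_right _ c tendsto_id)).sub hlim
  rw [sub_self] at hsub
  have hii : ∀ x, t₀ ≤ x → IntervalIntegrable f volume t₀ x := fun x hx =>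
    (intervalIntegrable_iff_integrableOn_Ioc_of_le hx).2 (hf.mono_set Ioc_subset_Ioi_self)
  refine hsub.congr' ?_
  filter_upwards [eventually_ge_atTop t₀, eventually_ge_atTop (t₀ - c)] with t ht htc
  exact intervalIntegral.integral_interval_sub_left (hii (t + c) (by linarith)) (hii t ht)

theorem tendsto_zero_of_integrableOn_Ioi_of_le_const_mul {g : ℝ → ℝ} {t₀ K : ℝ}
    (hg : IntegrableOn g (Ioi t₀)) (hg0 : ∀ t ≥ t₀, 0 ≤ g t)
    (hle : ∀ t ≥ t₀, ∀ s ∈ Icc t (t + 1), g t ≤ K * g s) :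
    Tendsto g atTop (𝓝 0) := by
  have hlim : Tendsto (fun t => K * ∫ s in t..t + 1, g s) atTop (𝓝 0) := by
    simpa only [mul_zero] using
      (tendsto_intervalIntegral_add_const_of_integrableOn_Ioi 1 hg).const_mul K
  refine tendsto_of_tendsto_of_tendsto_of_le_of_le' tendsto_const_nhds hlim
    (eventually_atTop.2 ⟨t₀, hg0⟩) (eventually_atTop.2 ⟨t₀, fun t ht => ?_⟩)
  have hgi : IntervalIntegrable g volume t (t + 1) :=
    (intervalIntegrable_iff_integrableOn_Ioc_of_le (by linarith)).2
      (hg.mono_set fun s hs => ht.trans_lt hs.1)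
  calc g t = ∫ _ in t..t + 1, g t := by simp
    _ ≤ ∫ s in t..t + 1, K * g s :=
      intervalIntegral.integral_mono_on (by linarith) intervalIntegrable_const
        (hgi.const_mul K) (hle t ht)
    _ = K * ∫ s in t..t + 1, g s := intervalIntegral.integral_const_mul K g

theorem tendsto_atTop_of_tendsto_one_div_pow_zero {α : Type*} {l : Filter α} {f : α → ℝ}
    {n : ℕ} (hn : n ≠ 0) (hpos : ∀ᶠ x in l, 0 < f x)
    (h : Tendsto (fun x => 1 / f x ^ n) l (𝓝 0)) : Tendsto f l atTop := by
  have hpow : Tendsto (fun x => f x ^ n) l atTop := by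
    have h' : Tendsto (fun x => 1 / f x ^ n) l (𝓝[>] 0) :=
      tendsto_nhdsWithin_iff.2 ⟨h, hpos.mono fun x hx => mem_Ioi.2 (by positivity)⟩
    exact h'.inv_tendsto_nhdsGT_zero.congr fun x => by simp
  refine ((tendsto_rpow_atTop (by positivity : (0 : ℝ) < (n : ℝ)⁻¹)).comp hpow).congr' ?_
  filter_upwards [hpos] with x hx
  exact pow_rpow_inv_natCast hx.le hn

/-- Lemma B.2 (integrability with bounded logarithmic derivative implies a divergent
tail): if `a > 0` is `C¹` on `[t₀, ∞)`, `|a'/a| ≤ H_max` there, and `a⁻³` is integrable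
on `[t₀, ∞)`, then `a(t) → +∞` as `t → +∞`. -/
theorem tail_divergence_of_integrable_inverse_cube
    (a : ℝ → ℝ) (t₀ H_max : ℝ)
    (ha : ContDiffOn ℝ 1 a (Set.Ici t₀))
    (hpos : ∀ t, t₀ ≤ t → 0 < a t)
    (hHb : ∀ t, t₀ ≤ t → |derivWithin a (Set.Ici t₀) t / a t| ≤ H_max)
    (hint : IntegrableOn (fun t => 1 / (a t) ^ 3) (Set.Ici t₀)) :
    Tendsto a atTop atTop := by
  have hH : 0 ≤ H_max := (abs_nonneg _).trans (hHb t₀ le_rfl)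
  have hda : DifferentiableOn ℝ a (Ici t₀) := ha.differentiableOn one_ne_zero
  refine tendsto_atTop_of_tendsto_one_div_pow_zero three_ne_zero
    (eventually_atTop.2 ⟨t₀, hpos⟩) ?_
  refine tendsto_zero_of_integrableOn_Ioi_of_le_const_mul (K := exp H_max ^ 3)
    (hint.mono_set Ioi_subset_Ici_self) (fun t ht => (one_div_pos.2 (pow_pos (hpos t ht) 3)).le)
    fun t ht s hs => ?_
  have hat := hpos t ht
  have hs_pos := hpos s (ht.trans hs.1)
  have hs_le : a s ≤ a t * exp H_max := by
    refine (le_mul_exp_of_abs_derivWithin_div_le (convex_Ici t₀) hda hpos hHb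
      (ht.trans hs.1) ht).trans ?_
    have hst : |s - t| ≤ 1 := abs_le.2 ⟨by linarith [hs.1], by linarith [hs.2]⟩
    gcongr
    exact mul_le_of_le_one_right hH hst
  calc 1 / a t ^ 3 = exp H_max ^ 3 * (1 / (a t * exp H_max) ^ 3) := by
        field_simp
    _ ≤ exp H_max ^ 3 * (1 / a s ^ 3) := by
        gcongr
end

section
/- Let a : ℝ → ℝ be twice continuously differentiable with a(t) ≥ a_min > 0 for all t, let H(t) = a'(t)/a(t) satisfy |H(t)| ≤ H_max for all t, and suppose 1/a is integrable on ℝ (∫_ℝ a(t)^{−1} dt < ∞). Then: ∫_ℝ H(t)²/a(t) dt < ∞; ∫_ℝ a(t)^{−3} dt < ∞; a(t) → +∞ as t → ±∞, hence H(t)/a(t) → 0 as t → ±∞; and the closed-FRW ANEC integrals I(T₋,T₊) = ∫_{T₋}^{T₊} (−2·(H'(t) − 1/a(t)²))/a(t) dt converge to a finite limit as T₋ → −∞ and T₊ → +∞. -/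
/-!
Everything is controlled by the integrable function `1 / a`: since `H` is bounded and `a ≥ a_min`,
the functions `H / a`, `H² / a` and `a⁻³` are bounded multiples of it. As `(1 / a)' = -H / a` is
integrable as well, `1 / a` tends to `0` at both ends, i.e. `a → ∞`, and then `H / a → 0`.
Finally `(ρ + p) / a = -2 (H / a)' - 2 H² / a + 2 / a³`, so the ANEC integral over `[T₋, T₊]` is
a boundary term, which vanishes in the limit, plus the integral of an integrable function.
-/

open Filter MeasureTheory Topology

theorem MeasureTheory.Integrable.bdd_div {α : Type*} [MeasurableSpace α] {μ : Measure α}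
    {f g : α → ℝ} {c : ℝ} (hg : Integrable (fun x => 1 / g x) μ)
    (hf : AEStronglyMeasurable f μ) (hf_bound : ∀ᵐ x ∂μ, ‖f x‖ ≤ c) :
    Integrable (fun x => f x / g x) μ := by
  simpa only [mul_one_div] using hg.bdd_mul hf hf_bound

theorem MeasureTheory.Integrable.one_div_pow_three {α : Type*} [MeasurableSpace α]
    {μ : Measure α} {g : α → ℝ} {m : ℝ} (hg : Integrable (fun x => 1 / g x) μ) (hm : 0 < m)
    (hgm : ∀ x, m ≤ g x) : Integrable (fun x => 1 / g x ^ 3) μ := by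
  have hbound : ∀ x, ‖(1 / g x) ^ 2‖ ≤ (1 / m) ^ 2 := fun x => by
    have hnonneg : 0 ≤ 1 / g x := one_div_nonneg.mpr (hm.le.trans (hgm x))
    rw [norm_pow, Real.norm_of_nonneg hnonneg]
    exact pow_le_pow_left₀ hnonneg (one_div_le_one_div_of_le hm (hgm x)) 2
  refine (hg.bdd_div (hg.aestronglyMeasurable.pow 2) (.of_forall hbound)).congr
    (.of_forall fun x => ?_)
  change (1 / g x) ^ 2 / g x = 1 / g x ^ 3
  rw [div_pow, one_pow, div_div, ← pow_succ]

theorem tendsto_cocompact_zero_of_hasDerivAt {E : Type*} [NormedAddCommGroup E]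
    [NormedSpace ℝ E] {f f' : ℝ → E} (hderiv : ∀ x, HasDerivAt f (f' x) x)
    (hf' : Integrable f') (hf : Integrable f) : Tendsto f (cocompact ℝ) (𝓝 0) := by
  rw [cocompact_eq_atBot_atTop]
  exact (tendsto_zero_of_hasDerivAt_of_integrableOn_Iic (a := 0) (fun x _ => hderiv x)
    hf'.integrableOn hf.integrableOn).sup
    (tendsto_zero_of_hasDerivAt_of_integrableOn_Ioi (a := 0) (fun x _ => hderiv x)
      hf'.integrableOn hf.integrableOn)

theorem Filter.Tendsto.atTop_of_one_div_tendsto_zero {α : Type*} {l : Filter α} {f : α → ℝ}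
    (hpos : ∀ x, 0 < f x) (h : Tendsto (fun x => 1 / f x) l (𝓝 0)) : Tendsto f l atTop := by
  have h' : Tendsto (fun x => 1 / f x) l (𝓝[>] 0) :=
    tendsto_nhdsWithin_of_tendsto_nhds_of_eventually_within _ h
      (Eventually.of_forall fun x => one_div_pos.mpr (hpos x))
  exact (tendsto_inv_nhdsGT_zero.comp h').congr fun x => by simp

theorem Filter.Tendsto.bdd_div {α : Type*} {l : Filter α} {f g : α → ℝ} {c : ℝ}
    (hg : Tendsto (fun x => 1 / g x) l (𝓝 0)) (hf : ∀ x, ‖f x‖ ≤ c) :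
    Tendsto (fun x => f x / g x) l (𝓝 0) := by
  simpa only [Pi.mul_apply, one_div_mul_eq_div] using
    hg.zero_mul_isBoundedUnder_le (g := f) (isBoundedUnder_of ⟨c, hf⟩)

theorem tendsto_intervalIntegral_of_hasDerivAt_sub_integrable {E : Type*} [NormedAddCommGroup E]
    [NormedSpace ℝ E] [CompleteSpace E] {f φ F : ℝ → E} {A B : E}
    (hF : ∀ t, HasDerivAt F (f t - φ t) t) (hf : Continuous f) (hφ : Integrable φ)
    (hbot : Tendsto F atBot (𝓝 A)) (htop : Tendsto F atTop (𝓝 B)) :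
    Tendsto (fun p : ℝ × ℝ => ∫ t in p.1..p.2, f t) (atBot ×ˢ atTop)
      (𝓝 (B - A + ∫ t, φ t)) := by
  have hsplit : ∀ x y : ℝ, ∫ t in x..y, f t = (F y - F x) + ∫ t in x..y, φ t := by
    intro x y
    have hfφ := (hf.intervalIntegrable x y).sub hφ.intervalIntegrable
    rw [← intervalIntegral.integral_eq_sub_of_hasDerivAt (fun t _ => hF t) hfφ,
      intervalIntegral.integral_sub (hf.intervalIntegrable x y) hφ.intervalIntegrable,
      sub_add_cancel]
  have hboundary := (htop.comp tendsto_snd).sub (hbot.comp tendsto_fst)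
  simpa only [hsplit, Function.comp_apply] using
    hboundary.add (intervalIntegral_tendsto_integral hφ tendsto_fst tendsto_snd)

section ScaleFactor

variable {a H : ℝ → ℝ} {t a' H' : ℝ}

theorem contDiff_deriv_div_self (ha : ContDiff ℝ 2 a) (hne : ∀ t, a t ≠ 0) :
    ContDiff ℝ 1 fun t => deriv a t / a t :=
  (ha.deriv' (n := 1)).div (ha.of_le one_le_two) hne

theorem hasDerivAt_one_div_scale (ha : HasDerivAt a a' t) (ht : a t ≠ 0)
    (hH : H t = a' / a t) : HasDerivAt (fun s => 1 / a s) (-(H t / a t)) t := by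
  refine ((hasDerivAt_const t (1 : ℝ)).div ha ht).congr_deriv ?_
  rw [hH]
  field_simp
  ring

theorem hasDerivAt_hubble_div_scale (hHt : HasDerivAt H H' t) (ha : HasDerivAt a a' t)
    (ht : a t ≠ 0) (hH : H t = a' / a t) :
    HasDerivAt (fun s => -2 * (H s / a s))
      (-2 * (H' - 1 / a t ^ 2) / a t - (-2 * (H t ^ 2 / a t) + 2 * (1 / a t ^ 3))) t := by
  refine ((hHt.div ha ht).const_mul (-2)).congr_deriv ?_
  rw [hH]
  field_simp
  ring

end ScaleFactor

/-- Corollary on integrable inverse-scale tails (Appendix B): with bounded `H`, `a`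
bounded below by `a_min > 0`, and `∫_ℝ 1/a < ∞`, one gets `∫_ℝ H²/a < ∞`,
`∫_ℝ a⁻³ < ∞`, `a → ∞` and `H/a → 0` at both ends, and the closed-FRW ANEC integrals
converge to a finite limit. -/
theorem closed_FRW_ANEC_finite_of_integrable_inverse_scale
    (a H : ℝ → ℝ) (a_min H_max : ℝ) (ha : ContDiff ℝ 2 a)
    (hmin : 0 < a_min) (hamin : ∀ t, a_min ≤ a t)
    (hH : ∀ t, H t = deriv a t / a t) (hHb : ∀ t, |H t| ≤ H_max)
    (hint1 : Integrable (fun t => 1 / a t)) :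
    Integrable (fun t => (H t) ^ 2 / a t) ∧
    Integrable (fun t => 1 / (a t) ^ 3) ∧
    Tendsto a atTop atTop ∧ Tendsto a atBot atTop ∧
    Tendsto (fun t => H t / a t) atTop (nhds 0) ∧
    Tendsto (fun t => H t / a t) atBot (nhds 0) ∧
    ∃ l : ℝ, Tendsto (fun p : ℝ × ℝ =>
        ∫ t in p.1..p.2, (-2 * (deriv H t - 1 / (a t) ^ 2)) / a t)
      (atBot ×ˢ atTop) (nhds l) := by
  have hpos : ∀ t, 0 < a t := fun t => hmin.trans_le (hamin t)
  have hne : ∀ t, a t ≠ 0 := fun t => (hpos t).ne'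
  have hda : ∀ t, HasDerivAt a (deriv a t) t :=
    fun t => (ha.differentiable two_ne_zero t).hasDerivAt
  have hH1 : ContDiff ℝ 1 H := by
    rw [funext hH]
    exact contDiff_deriv_div_self ha hne
  have hHa : Integrable fun t => H t / a t :=
    hint1.bdd_div hH1.continuous.aestronglyMeasurable (.of_forall hHb)
  have hsq : Integrable fun t => H t ^ 2 / a t :=
    hint1.bdd_div (hH1.continuous.pow 2).aestronglyMeasurable (.of_forall fun t =>
      (norm_pow (H t) 2).trans_le (pow_le_pow_left₀ (norm_nonneg _) (hHb t) 2))
  have hcube : Integrable fun t => 1 / a t ^ 3 := hint1.one_div_pow_three hmin hamin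
  have hinv : Tendsto (fun t => 1 / a t) (cocompact ℝ) (𝓝 0) :=
    tendsto_cocompact_zero_of_hasDerivAt
      (fun t => hasDerivAt_one_div_scale (hda t) (hne t) (hH t)) hHa.neg hint1
  have hHa_lim : Tendsto (fun t => H t / a t) (cocompact ℝ) (𝓝 0) := hinv.bdd_div hHb
  have hcont : Continuous fun t => (-2 * (deriv H t - 1 / (a t) ^ 2)) / a t := by
    refine (continuous_const.mul ((hH1.continuous_deriv le_rfl).sub ?_)).div ha.continuous hne
    exact continuous_const.div (ha.continuous.pow 2) fun t => pow_ne_zero 2 (hne t)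
  have hHa_top := hHa_lim.mono_left atTop_le_cocompact
  have hHa_bot := hHa_lim.mono_left atBot_le_cocompact
  refine ⟨hsq, hcube, (hinv.mono_left atTop_le_cocompact).atTop_of_one_div_tendsto_zero hpos,
    (hinv.mono_left atBot_le_cocompact).atTop_of_one_div_tendsto_zero hpos, hHa_top, hHa_bot, _,
    tendsto_intervalIntegral_of_hasDerivAt_sub_integrable
      (fun t => hasDerivAt_hubble_div_scale (hH1.differentiable one_ne_zero t).hasDerivAt
        (hda t) (hne t) (hH t))
      hcont ((hsq.const_mul (-2)).add (hcube.const_mul 2))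
      (hHa_bot.const_mul (-2)) (hHa_top.const_mul (-2))⟩
end
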